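/- arXiv:1609.08868 — 2 statements merged into one kernel-verified Lean document; each statement's English description precedes it below -/
import Mathlib

section
/- Let a_1, ..., a_N be positive reals and let A_i = a_1 + ... + a_i. Then the sum over i from 1 to N of a_i / A_i is at most 1 + ln(A_N / a_1). -/
/-!
The first term is `a_1 / A_1 = 1`, and for `i ≥ 2`,
`a_i / A_i = 1 - A_{i-1} / A_i ≤ log A_i - log A_{i-1}` because `1 - t⁻¹ ≤ log t`.
The remaining terms therefore telescope to at most `log A_N - log A_1`.
-/

open Finset Real

lemma Real.sub_div_le_log_sub_log {x y : ℝ} (hx : 0 < x) (hy : 0 < y) :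
    (x - y) / x ≤ log x - log y := by
  have h := one_sub_inv_le_log_of_pos (div_pos hx hy)
  rwa [inv_div, log_div hx.ne' hy.ne', one_sub_div hx.ne'] at h

lemma sum_range_sub_div_le_log_sub_log (S : ℕ → ℝ) (n : ℕ) (hS : ∀ k ≤ n, 0 < S k) :
    ∑ k ∈ range n, (S (k + 1) - S k) / S (k + 1) ≤ log (S n) - log (S 0) := by
  calc ∑ k ∈ range n, (S (k + 1) - S k) / S (k + 1)
      ≤ ∑ k ∈ range n, (log (S (k + 1)) - log (S k)) := by
        refine sum_le_sum fun k hk => ?_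
        have hk := mem_range.mp hk
        exact sub_div_le_log_sub_log (hS _ hk) (hS _ hk.le)
    _ = log (S n) - log (S 0) := sum_range_sub (fun k => log (S k)) n

lemma sum_range_div_partialSum_le (b : ℕ → ℝ) (n : ℕ) (hb : ∀ k ≤ n, 0 < b k) :
    ∑ k ∈ range (n + 1), b k / ∑ j ∈ range (k + 1), b j ≤
      1 + log ((∑ j ∈ range (n + 1), b j) / b 0) := by
  set S : ℕ → ℝ := fun k => ∑ j ∈ range (k + 1), b j with hSdef
  have hS : ∀ k ≤ n, 0 < S k := fun k hk =>
    sum_pos (fun j hj => hb j (by rw [mem_range] at hj; omega)) nonempty_range_add_one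
  have hS0 : S 0 = b 0 := sum_range_one b
  have hb_succ : ∀ k, b (k + 1) = S (k + 1) - S k := fun k => by
    simp only [hSdef, sum_range_succ _ (k + 1)]
    ring
  rw [sum_range_succ', ← hS0, div_self (hS 0 n.zero_le).ne',
    log_div (hS n le_rfl).ne' (hS 0 n.zero_le).ne', add_comm]
  simp only [hb_succ]
  gcongr
  exact sum_range_sub_div_le_log_sub_log S n hS

lemma Fin.sum_Iic_eq_sum_range {M : Type*} [AddCommMonoid M] {N : ℕ} (f : ℕ → M) (i : Fin N) :
    ∑ j ∈ Iic i, f j = ∑ k ∈ range (i + 1), f k := by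
  rw [Nat.range_succ_eq_Iic, ← Fin.map_valEmbedding_Iic, sum_map]
  rfl

theorem stmt_4 (N : ℕ) (hN : 0 < N) (a : Fin N → ℝ) (ha : ∀ i, 0 < a i) :
    ∑ i : Fin N, a i / (∑ j ∈ Finset.Iic i, a j) ≤
      1 + Real.log ((∑ i : Fin N, a i) / a ⟨0, hN⟩) := by
  obtain ⟨n, rfl⟩ := Nat.exists_eq_add_one_of_ne_zero hN.ne'
  set b : ℕ → ℝ := fun k => if h : k < n + 1 then a ⟨k, h⟩ else 0 with hbdef
  have hab : ∀ i : Fin (n + 1), a i = b i := fun i => by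
    simp only [hbdef, dif_pos i.isLt]
  have hb : ∀ k ≤ n, 0 < b k := fun k hk => by
    simp only [hbdef, dif_pos (Nat.lt_succ_of_le hk)]
    exact ha _
  simp only [hab, Fin.sum_Iic_eq_sum_range b]
  rw [Fin.sum_univ_eq_sum_range (fun k => b k / ∑ j ∈ range (k + 1), b j),
    Fin.sum_univ_eq_sum_range b]
  exact sum_range_div_partialSum_le b n hb
end

section
/- Let a_1, ..., a_N be positive reals summing to 1, with each a_i ≥ g^n for some 0 < g ≤ 1 and positive integer n. Then the sum over i from 1 to N of a_i / (a_1 + ... + a_i) is at most 1 + n·ln(1/g). -/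
/-!
Write `S i = a 0 + ⋯ + a i`. The first term of the sum is `1`, and every later term satisfies
`a i / S i ≤ log S i - log S (i - 1)` by `1 - 1/x ≤ log x`, so the sum telescopes to at most
`1 + log S (N - 1) - log (a 0) = 1 - log (a 0) ≤ 1 + n log (1/g)`.
-/

open Finset Real

lemma div_add_le_log_add_sub_log {b c : ℝ} (hb : 0 < b) (hc : 0 < c) :
    c / (b + c) ≤ log (b + c) - log b := by
  have hbc : 0 < b + c := by linarith
  calc c / (b + c) = 1 - ((b + c) / b)⁻¹ := by field_simp; ring
    _ ≤ log ((b + c) / b) := one_sub_inv_le_log_of_pos (by positivity)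
    _ = log (b + c) - log b := log_div hbc.ne' hb.ne'

theorem sum_div_sum_Iic_le_one_add_log_sub_log {M : ℕ} (a : Fin (M + 1) → ℝ)
    (ha : ∀ i, 0 < a i) :
    ∑ i, a i / ∑ j ∈ Iic i, a j ≤ 1 + log (∑ i, a i) - log (a 0) := by
  induction M with
  | zero =>
    rw [Fin.sum_univ_one, Fin.sum_univ_one, ← bot_eq_zero, Iic_bot, sum_singleton,
      div_self (ha ⊥).ne']
    simp
  | succ M ih =>
    have hinit := ih (fun i ↦ a i.castSucc) (fun i ↦ ha _)
    have hlast : a (Fin.last _) / ∑ j ∈ Iic (Fin.last _), a j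
        ≤ log (∑ i, a i) - log (∑ i : Fin (M + 1), a i.castSucc) := by
      rw [← Fin.top_eq_last, Iic_top, Fin.sum_univ_castSucc a]
      exact div_add_le_log_add_sub_log (sum_pos (fun i _ ↦ ha _) univ_nonempty) (ha _)
    rw [Fin.sum_univ_castSucc]
    simp only [Fin.sum_Iic_castSucc, Fin.castSucc_zero] at hinit ⊢
    linarith

theorem stmt_5_general (N : ℕ) (a : Fin N → ℝ)
    (hsum : ∑ i : Fin N, a i = 1) (g : ℝ) (hg0 : 0 < g)
    (n : ℕ) (hlb : ∀ i, g ^ n ≤ a i) :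
    ∑ i : Fin N, a i / (∑ j ∈ Finset.Iic i, a j) ≤ 1 + n * Real.log (1 / g) := by
  rcases N with _ | M
  · simp at hsum
  have ha i : 0 < a i := (pow_pos hg0 n).trans_le (hlb i)
  have hlog : n * log g ≤ log (a 0) := by
    rw [← log_pow]; exact log_le_log (pow_pos hg0 n) (hlb 0)
  have hbound := sum_div_sum_Iic_le_one_add_log_sub_log a ha
  rw [hsum, log_one] at hbound
  rw [one_div, log_inv]
  linarith

theorem stmt_5 (N : ℕ) (hN : 0 < N) (a : Fin N → ℝ) (ha : ∀ i, 0 < a i)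
    (hsum : ∑ i : Fin N, a i = 1) (g : ℝ) (hg0 : 0 < g) (hg1 : g ≤ 1)
    (n : ℕ) (hn : 0 < n) (hlb : ∀ i, g ^ n ≤ a i) :
    ∑ i : Fin N, a i / (∑ j ∈ Finset.Iic i, a j) ≤ 1 + n * Real.log (1 / g) :=
  stmt_5_general N a hsum g hg0 n hlb
end
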